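/- arXiv:1512.07650 — 2 statements merged into one kernel-verified Lean document; each statement's English description precedes it below -/
import Mathlib

section
/- Let F : ℝ → [0,1] be a CDF with 1 − F(μ* − ε) ≥ g for some g ∈ (0,1], ε > 0, and let 0 < δ < 1. If N ≥ ⌈ln(1/δ)/g⌉ + 1, then the maximum V_N of N i.i.d. samples with CDF F satisfies P(V_N ≤ μ* − ε) < δ. -/
/-!
The maximum of the samples is at most `t = μ* - ε` only if every sample is, so by independence
`P(V_N ≤ t) = F(t)^N ≤ (1 - g)^N ≤ exp(-g N)`, and `N > ln(1/δ)/g` makes this smaller than `δ`.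
-/

open MeasureTheory ProbabilityTheory

theorem ProbabilityTheory.iIndepFun.measure_sup'_le_eq_prod {Ω ι β : Type*} [MeasurableSpace Ω]
    {P : Measure Ω} [SemilatticeSup β] [TopologicalSpace β] [ClosedIicTopology β]
    [MeasurableSpace β] [OpensMeasurableSpace β] {X : ι → Ω → β} (hX : iIndepFun X P)
    (s : Finset ι) (hs : s.Nonempty) (t : β) :
    P {ω | s.sup' hs (fun i => X i ω) ≤ t} = ∏ i ∈ s, P {ω | X i ω ≤ t} := by
  have hmax : {ω | s.sup' hs (fun i => X i ω) ≤ t} = ⋂ i ∈ s, X i ⁻¹' Set.Iic t := by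
    ext ω
    simp [Finset.sup'_le_iff]
  rw [hmax, hX.measure_inter_preimage_eq_mul s fun _ _ => measurableSet_Iic]
  rfl

theorem Real.exp_neg_mul_lt_of_log_inv_div_lt {g δ x : ℝ} (hg : 0 < g) (hδ : 0 < δ)
    (hx : Real.log (1 / δ) / g < x) : Real.exp (-(g * x)) < δ := by
  rw [← Real.lt_log_iff_exp_lt hδ]
  rw [div_lt_iff₀ hg, one_div, Real.log_inv] at hx
  linarith

theorem ENNReal.ofReal_pow_lt_of_le_one_sub {p g δ : ℝ} {n : ℕ} (hg : 0 < g) (hδ : 0 < δ)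
    (hp : p ≤ 1 - g) (hn : Real.log (1 / δ) / g < n) :
    ENNReal.ofReal p ^ n < ENNReal.ofReal δ := by
  have hp_exp : p ≤ Real.exp (-g) := by linarith [Real.add_one_le_exp (-g)]
  calc ENNReal.ofReal p ^ n ≤ ENNReal.ofReal (Real.exp (-g)) ^ n := by
        gcongr
    _ = ENNReal.ofReal (Real.exp (-(g * n))) := by
        rw [← ENNReal.ofReal_pow (Real.exp_nonneg _), ← Real.exp_nat_mul]
        ring_nf
    _ < ENNReal.ofReal δ :=
        (ENNReal.ofReal_lt_ofReal_iff hδ).mpr (Real.exp_neg_mul_lt_of_log_inv_div_lt hg hδ hn)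

theorem stmt_11 {Ω : Type*} [MeasurableSpace Ω] (P : Measure Ω)
    (F : ℝ → ℝ) (μstar ε g δ : ℝ) (hg : 0 < g)
    (hδ0 : 0 < δ)
    (htail : 1 - F (μstar - ε) ≥ g)
    (X : ℕ → Ω → ℝ)
    (hindep : iIndepFun X P)
    (hcdf : ∀ i μ, P {ω | X i ω ≤ μ} = ENNReal.ofReal (F μ))
    (N : ℕ) (hN : N ≥ ⌈Real.log (1 / δ) / g⌉₊ + 1) :
    P {ω | (Finset.range N).sup'
          (Finset.nonempty_range_iff.mpr (by omega))
          (fun i => X i ω) ≤ μstar - ε} < ENNReal.ofReal δ := by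
  rw [hindep.measure_sup'_le_eq_prod, Finset.prod_congr rfl fun i _ => hcdf i _,
    Finset.prod_const, Finset.card_range]
  exact ENNReal.ofReal_pow_lt_of_le_one_sub hg hδ0 (by linarith) (Nat.lt_of_ceil_lt hN)
end

section
/- Let F : ℝ → [0,1] be a CDF with maximal value μ* and tail bound 1 − F(μ* − ε) ≥ G(ε)/K for ε ∈ [0, ε_0], where G is nonnegative on [0, ε_0] and K ≥ 1. Then the probability that the maximum of N = ⌈K·ln(1/δ)/G(ε)⌉ + 1 i.i.d. samples is at most μ* − ε is strictly less than δ, for any ε ∈ (0, ε_0] with G(ε) > 0 and δ ∈ (0, 1). -/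
/-!
The event that the maximum of the samples is at most `μ* - ε` is the intersection of the
independent events `Xᵢ ≤ μ* - ε`, so its probability is `F(μ* - ε)^N`. The tail bound gives
`F(μ* - ε) ≤ 1 - G(ε)/K ≤ exp(-G(ε)/K)`, and `N > K log(1/δ) / G(ε)` makes
`exp(-N G(ε)/K) < δ`.
-/

open MeasureTheory ProbabilityTheory

theorem ProbabilityTheory.iIndepFun.measure_sup'_le {Ω ι : Type*} [MeasurableSpace Ω]
    {P : Measure Ω} [IsProbabilityMeasure P] {X : ι → Ω → ℝ} (hX : iIndepFun X P)
    (s : Finset ι) (hs : s.Nonempty) (t : ℝ) :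
    P {ω | s.sup' hs (fun i => X i ω) ≤ t} = ∏ i ∈ s, P {ω | X i ω ≤ t} := by
  have hinter : {ω | s.sup' hs (fun i => X i ω) ≤ t} = ⋂ i ∈ s, X i ⁻¹' Set.Iic t := by
    ext ω
    simp [Finset.sup'_le_iff]
  rw [hinter, hX.meas_biInter fun i _ => ⟨Set.Iic t, measurableSet_Iic, rfl⟩]
  rfl

theorem lt_mul_natCeil_div_add_one {c : ℝ} (hc : 0 < c) (b : ℝ) :
    b < c * ((⌈b / c⌉₊ + 1 : ℕ) : ℝ) := by
  have hceil : b / c < ((⌈b / c⌉₊ + 1 : ℕ) : ℝ) := by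
    push_cast
    linarith [Nat.le_ceil (b / c)]
  rwa [div_lt_iff₀ hc, mul_comm] at hceil

theorem ENNReal.ofReal_pow_le_ofReal_exp {x a : ℝ} (hx : x ≤ 1 - a) (n : ℕ) :
    ENNReal.ofReal x ^ n ≤ ENNReal.ofReal (Real.exp (-(a * n))) := by
  have hexp : x ≤ Real.exp (-a) := by linarith [Real.add_one_le_exp (-a)]
  calc ENNReal.ofReal x ^ n ≤ ENNReal.ofReal (Real.exp (-a)) ^ n := by
        gcongr
    _ = ENNReal.ofReal (Real.exp (-(a * n))) := by
        rw [← ENNReal.ofReal_pow (Real.exp_nonneg _), ← Real.exp_nat_mul]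
        ring_nf

theorem stmt_18 {Ω : Type*} [MeasurableSpace Ω] (P : Measure Ω) [IsProbabilityMeasure P]
    (F : ℝ → ℝ) (μstar ε₀ : ℝ) (G : ℝ → ℝ) (K : ℕ) (hK : 1 ≤ K)
    (htail : ∀ ε, 0 ≤ ε → ε ≤ ε₀ → 1 - F (μstar - ε) ≥ G ε / K)
    (X : ℕ → Ω → ℝ)
    (hindep : iIndepFun X P)
    (hcdf : ∀ i μ, P {ω | X i ω ≤ μ} = ENNReal.ofReal (F μ))
    (ε δ : ℝ) (hε : 0 < ε) (hεle : ε ≤ ε₀) (hGε : 0 < G ε) (hδ0 : 0 < δ)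
    (N : ℕ) (hN : N = ⌈(K : ℝ) * Real.log (1 / δ) / G ε⌉₊ + 1) :
    P {ω | (Finset.range N).sup'
          (Finset.nonempty_range_iff.mpr (by omega))
          (fun i => X i ω) ≤ μstar - ε} < ENNReal.ofReal δ := by
  have ha : 0 < G ε / K := div_pos hGε (by exact_mod_cast hK)
  have hlog : Real.log (1 / δ) < G ε / K * N := by
    have hNdiv : (K : ℝ) * Real.log (1 / δ) / G ε = Real.log (1 / δ) / (G ε / K) := by
      field_simp
    rw [hN, hNdiv]
    exact lt_mul_natCeil_div_add_one ha _
  have hexp : Real.exp (-(G ε / K * N)) < δ := by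
    rw [← Real.lt_log_iff_exp_lt hδ0]
    rw [one_div, Real.log_inv] at hlog
    linarith
  calc P {ω | (Finset.range N).sup' _ (fun i => X i ω) ≤ μstar - ε}
      = ENNReal.ofReal (F (μstar - ε)) ^ N := by
        rw [hindep.measure_sup'_le]
        simp only [hcdf, Finset.prod_const, Finset.card_range]
    _ ≤ ENNReal.ofReal (Real.exp (-(G ε / K * N))) :=
        ENNReal.ofReal_pow_le_ofReal_exp (by linarith [htail ε hε.le hεle]) N
    _ < ENNReal.ofReal δ := (ENNReal.ofReal_lt_ofReal_iff hδ0).2 hexp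
end
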